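/- For every k ≥ 3, the Poisson bracket map S³H ⊗ SᵏH → S^{k+1}H, given by f ⊗ g ↦ {f,g} for cubic f and degree-k homogeneous g in 2n variables, is surjective. -/

import Mathlib

open MvPolynomial

/-- The standard Poisson bracket on polynomials in `2n` variables
`x i = Sum.inl i`, `y i = Sum.inr i`. -/
noncomputable def pb {n : ℕ} (f g : MvPolynomial (Fin n ⊕ Fin n) ℝ) :
    MvPolynomial (Fin n ⊕ Fin n) ℝ :=
  ∑ i : Fin n,
    (pderiv (Sum.inl i) f * pderiv (Sum.inr i) g -
      pderiv (Sum.inr i) f * pderiv (Sum.inl i) g)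

/-!
The bracket of the monomials `x^a` and `x^b` is `∑ᵢ ωᵢ(a, b) x^(a + b - xᵢ - yᵢ)` with
`ωᵢ(a, b) = a(xᵢ) b(yᵢ) - a(yᵢ) b(xᵢ)`, so it suffices to reach every monomial `m · v` of degree
`k + 1` (with `v` a variable) up to a nonzero scalar. Take `f = xᵢ yᵢ v` and `g = m`: only the
`i`-th term survives, with coefficient `2 m(yᵢ) - m(xᵢ)` if `v = xᵢ`, `m(yᵢ) - 2 m(xᵢ)` if
`v = yᵢ`, and `m(yᵢ) - m(xᵢ)` if `v` is `xⱼ` or `yⱼ` for some `j ≠ i` and `m` does not contain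
the conjugate of `v`. A monomial reached by none of the first two choices contains, for every
index, at most one of `xᵢ, yᵢ` and only to the first power; having degree at least `2`, it
involves two distinct indices, and the third choice applies.
-/

open Finsupp Sum

section

variable {σ R : Type*} [CommSemiring R]

theorem pderiv_monomial_mul_pderiv_monomial (a b : σ →₀ ℕ) (v w : σ) :
    pderiv v (monomial a (1 : R)) * pderiv w (monomial b 1) =
      monomial (a - single v 1 + (b - single w 1)) ((a v * b w : ℕ) : R) := by
  simp [pderiv_monomial, monomial_mul]

theorem pderiv_monomial_mul_pderiv_monomial_of_add_eq {a b e : σ →₀ ℕ} {v w : σ}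
    (h : a + b = e + single v 1 + single w 1) :
    pderiv v (monomial a (1 : R)) * pderiv w (monomial b 1) =
      monomial e ((a v * b w : ℕ) : R) := by
  rw [pderiv_monomial_mul_pderiv_monomial]
  rcases Nat.eq_zero_or_pos (a v * b w) with h0 | hpos
  · simp [h0]
  have hva : single v 1 ≤ a := single_le_iff.mpr (Nat.pos_of_mul_pos_right hpos)
  have hwb : single w 1 ≤ b := single_le_iff.mpr (Nat.pos_of_mul_pos_left hpos)
  rw [tsub_add_tsub_comm hva hwb, h, add_assoc, add_tsub_cancel_right]

theorem exists_eq_add_single_of_ne_zero {d : σ →₀ ℕ} {v : σ} (h : d v ≠ 0) :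
    ∃ c, d = c + single v 1 :=
  ⟨d - single v 1,
    (tsub_add_cancel_of_le (single_le_iff.mpr (Nat.one_le_iff_ne_zero.mpr h))).symm⟩

end

noncomputable def cubicBracketSpan (n k : ℕ) : Submodule ℝ (MvPolynomial (Fin n ⊕ Fin n) ℝ) :=
  Submodule.span ℝ {p | ∃ f g, f.IsHomogeneous 3 ∧ g.IsHomogeneous k ∧ p = pb f g}

section

variable {n k : ℕ}

theorem pb_monomial_of_add_eq {a b d : Fin n ⊕ Fin n →₀ ℕ} {i : Fin n}
    (hab : a + b = d + single (inl i) 1 + single (inr i) 1)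
    (hvanish : ∀ t ≠ i, a (inl t) * b (inr t) = 0 ∧ a (inr t) * b (inl t) = 0) :
    pb (monomial a 1) (monomial b 1) =
      monomial d ((a (inl i) * b (inr i) : ℕ) - (a (inr i) * b (inl i) : ℕ) : ℝ) := by
  have hba : a + b = d + single (inr i) 1 + single (inl i) 1 := by rw [hab, add_right_comm]
  rw [pb, Finset.sum_eq_single i, pderiv_monomial_mul_pderiv_monomial_of_add_eq hab,
    pderiv_monomial_mul_pderiv_monomial_of_add_eq hba, ← map_sub]
  · intro t _ hti
    simp only [pderiv_monomial_mul_pderiv_monomial, (hvanish t hti).1, (hvanish t hti).2]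
    simp
  · simp

theorem monomial_mem_cubicBracketSpan {a b d : Fin n ⊕ Fin n →₀ ℕ} (i : Fin n)
    (ha : a.degree = 3) (hb : b.degree = k)
    (hab : a + b = d + single (inl i) 1 + single (inr i) 1)
    (hvanish : ∀ t ≠ i, a (inl t) * b (inr t) = 0 ∧ a (inr t) * b (inl t) = 0)
    (hω : a (inl i) * b (inr i) ≠ a (inr i) * b (inl i)) :
    monomial d 1 ∈ cubicBracketSpan n k := by
  set ω : ℝ := (a (inl i) * b (inr i) : ℕ) - (a (inr i) * b (inl i) : ℕ)
  have hω' : ω ≠ 0 := sub_ne_zero.mpr (by exact_mod_cast hω)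
  have hpb : pb (monomial a 1) (monomial b 1) ∈ cubicBracketSpan n k :=
    Submodule.subset_span ⟨_, _, isHomogeneous_monomial 1 ha, isHomogeneous_monomial 1 hb, rfl⟩
  rw [pb_monomial_of_add_eq hab hvanish] at hpb
  have hd : monomial d (1 : ℝ) = ω⁻¹ • monomial d ω := by
    rw [smul_monomial, smul_eq_mul, inv_mul_cancel₀ hω']
  rw [hd]
  exact Submodule.smul_mem _ _ hpb

section

variable {c : Fin n ⊕ Fin n →₀ ℕ}

theorem monomial_add_single_inl_mem (hc : c.degree = k) (i : Fin n)
    (h : c (inl i) ≠ 2 * c (inr i)) :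
    monomial (c + single (inl i) 1) 1 ∈ cubicBracketSpan n k := by
  refine monomial_mem_cubicBracketSpan i
    (a := single (inl i) 1 + single (inl i) 1 + single (inr i) 1)
    (by simp) hc (by abel) (fun t hti => by simp [hti]) ?_
  simp
  omega

theorem monomial_add_single_inr_mem (hc : c.degree = k) (i : Fin n)
    (h : c (inr i) ≠ 2 * c (inl i)) :
    monomial (c + single (inr i) 1) 1 ∈ cubicBracketSpan n k := by
  refine monomial_mem_cubicBracketSpan i
    (a := single (inl i) 1 + single (inr i) 1 + single (inr i) 1)
    (by simp) hc (by abel) (fun t hti => by simp [hti]) ?_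
  simp
  omega

theorem monomial_add_single_inl_mem_of_ne (hc : c.degree = k) {i j : Fin n} (hij : i ≠ j)
    (hcj : c (inr j) = 0) (h : c (inl i) ≠ c (inr i)) :
    monomial (c + single (inl j) 1) 1 ∈ cubicBracketSpan n k := by
  refine monomial_mem_cubicBracketSpan i
    (a := single (inl i) 1 + single (inr i) 1 + single (inl j) 1)
    (by simp) hc (by abel) (fun t hti => ?_) ?_
  · rcases eq_or_ne t j with rfl | htj <;> simp [*]
  · simp [hij.symm]
    omega

theorem monomial_add_single_inr_mem_of_ne (hc : c.degree = k) {i j : Fin n} (hij : i ≠ j)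
    (hcj : c (inl j) = 0) (h : c (inl i) ≠ c (inr i)) :
    monomial (c + single (inr j) 1) 1 ∈ cubicBracketSpan n k := by
  refine monomial_mem_cubicBracketSpan i
    (a := single (inl i) 1 + single (inr i) 1 + single (inr j) 1)
    (by simp) hc (by abel) (fun t hti => ?_) ?_
  · rcases eq_or_ne t j with rfl | htj <;> simp [*]
  · simp [hij.symm]
    omega

end

section

variable {d : Fin n ⊕ Fin n →₀ ℕ}

theorem exists_ne_of_degree_of_add_le_one (hk : 1 ≤ k) (hd : d.degree = k + 1)
    (hpair : ∀ t, d (inl t) + d (inr t) ≤ 1) :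
    ∃ i j, i ≠ j ∧ d (inl i) + d (inr i) = 1 ∧ d (inl j) + d (inr j) = 1 := by
  have hsum : ∑ t, (d (inl t) + d (inr t)) = k + 1 := by
    rw [← hd, degree_eq_sum, Fintype.sum_sum_type, Finset.sum_add_distrib]
  obtain ⟨j, hj⟩ : ∃ j, d (inl j) + d (inr j) ≠ 0 := by
    by_contra! h0
    simp [h0] at hsum
  obtain ⟨i, hij, hi⟩ : ∃ i ≠ j, d (inl i) + d (inr i) ≠ 0 := by
    by_contra! h0
    rw [Finset.sum_eq_single j (fun t _ ht => h0 t ht) (by simp)] at hsum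
    have := hpair j
    omega
  exact ⟨i, j, hij, by have := hpair i; omega, by have := hpair j; omega⟩

theorem monomial_mem_of_add_le_one (hk : 1 ≤ k) (hd : d.degree = k + 1)
    (hpair : ∀ t, d (inl t) + d (inr t) ≤ 1) :
    monomial d 1 ∈ cubicBracketSpan n k := by
  obtain ⟨i, j, hij, hi, hj⟩ := exists_ne_of_degree_of_add_le_one hk hd hpair
  rcases Nat.eq_zero_or_pos (d (inl j)) with hxj | hxj
  · obtain ⟨c, rfl⟩ := exists_eq_add_single_of_ne_zero (v := inr j) (d := d) (by omega)
    refine monomial_add_single_inr_mem_of_ne (by simpa using hd) hij (by simpa using hxj) ?_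
    simp [hij] at hi
    omega
  · obtain ⟨c, rfl⟩ := exists_eq_add_single_of_ne_zero (v := inl j) (d := d) (by omega)
    refine monomial_add_single_inl_mem_of_ne (by simpa using hd) hij (by simp at hj; omega) ?_
    simp [hij] at hi
    omega

theorem monomial_mem_cubicBracketSpan_of_degree (hk : 1 ≤ k) (hd : d.degree = k + 1) :
    monomial d 1 ∈ cubicBracketSpan n k := by
  by_cases hx : ∃ i, d (inl i) ≠ 0 ∧ d (inl i) ≠ 2 * d (inr i) + 1
  · obtain ⟨i, hi, hne⟩ := hx
    obtain ⟨c, rfl⟩ := exists_eq_add_single_of_ne_zero hi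
    exact monomial_add_single_inl_mem (by simpa using hd) i (by simpa using hne)
  by_cases hy : ∃ i, d (inr i) ≠ 0 ∧ d (inr i) ≠ 2 * d (inl i) + 1
  · obtain ⟨i, hi, hne⟩ := hy
    obtain ⟨c, rfl⟩ := exists_eq_add_single_of_ne_zero hi
    exact monomial_add_single_inr_mem (by simpa using hd) i (by simpa using hne)
  push Not at hx hy
  refine monomial_mem_of_add_le_one hk hd fun t => ?_
  have := hx t
  have := hy t
  omega

end

end

theorem poisson_bracket_S3_Sk_surjective_general {n : ℕ} (k : ℕ) (hk : 3 ≤ k)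
    (h : MvPolynomial (Fin n ⊕ Fin n) ℝ) (hh : h.IsHomogeneous (k + 1)) :
    h ∈ Submodule.span ℝ
      {p : MvPolynomial (Fin n ⊕ Fin n) ℝ |
        ∃ f g, f.IsHomogeneous 3 ∧ g.IsHomogeneous k ∧ p = pb f g} := by
  suffices homogeneousSubmodule _ ℝ (k + 1) ≤ cubicBracketSpan n k from this hh
  rw [homogeneousSubmodule_eq_finsupp_supported, AddMonoidAlgebra.supported_eq_span_single,
    Submodule.span_le]
  rintro _ ⟨d, hd, rfl⟩
  exact monomial_mem_cubicBracketSpan_of_degree (by omega) hd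

/-- For every `k ≥ 3` the Poisson bracket map `S³H ⊗ SᵏH → S^{k+1}H` is surjective:
every homogeneous polynomial of degree `k+1` is a linear combination of brackets
`{f,g}` with `f` cubic and `g` homogeneous of degree `k`. -/
theorem poisson_bracket_S3_Sk_surjective {n : ℕ} (hn : 0 < n) (k : ℕ) (hk : 3 ≤ k)
    (h : MvPolynomial (Fin n ⊕ Fin n) ℝ) (hh : h.IsHomogeneous (k + 1)) :
    h ∈ Submodule.span ℝ
      {p : MvPolynomial (Fin n ⊕ Fin n) ℝ |
        ∃ f g, f.IsHomogeneous 3 ∧ g.IsHomogeneous k ∧ p = pb f g} :=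
  poisson_bracket_S3_Sk_surjective_general k hk h hh
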